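/- Let K, H, θ be real numbers with D := K·sin²θ - H·sin(2θ) + 1 ≠ 0. Define K^θ = (K·cos(2θ) + 2H·sin(2θ))/D and H^θ = (K·sinθ·cosθ - H·cos(2θ))/D. If tan(2θ) = 1/H (with H ≠ 0, cos(2θ) ≠ 0), then K^θ = cot²θ - 1 provided sinθ ≠ 0; and if tan²θ = 1/(K+1) (with K+1 > 0, cosθ ≠ 0), then H^θ = cot(2θ). -/

import Mathlib

/-!
Both choices of `θ` make the numerator and the denominator of the curvature proportional.
If `H sin 2θ = cos 2θ`, then `D = (K + 2) sin² θ` and the numerator of `K^θ` is `(K + 2) cos 2θ`,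
so `K^θ = cos 2θ / sin² θ = cot² θ - 1`. If `(K + 1) sin² θ = cos² θ`, then `K sin² θ = cos 2θ`,
whence `D = 2 cos θ (cos θ - H sin θ)` while the numerator of `H^θ` is
`cos 2θ (cos θ - H sin θ) / sin θ`, so `H^θ = cot 2θ`.
-/

open Real

theorem mul_sin_eq_cos_of_tan_eq_one_div {x H : ℝ} (hH : H ≠ 0) (hx : cos x ≠ 0)
    (h : tan x = 1 / H) : H * sin x = cos x := by
  rw [tan_eq_sin_div_cos, div_eq_div_iff hx hH] at h
  linarith

theorem mul_sin_sq_eq_cos_sq_of_tan_sq_eq_one_div {x c : ℝ} (hc : c ≠ 0) (hx : cos x ≠ 0)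
    (h : tan x ^ 2 = 1 / c) : c * sin x ^ 2 = cos x ^ 2 := by
  rw [tan_eq_sin_div_cos, div_pow, div_eq_div_iff (pow_ne_zero 2 hx) hc] at h
  linarith

theorem cos_two_mul_div_sin_sq {x : ℝ} (hx : sin x ≠ 0) :
    cos (2 * x) / sin x ^ 2 = (cos x / sin x) ^ 2 - 1 := by
  rw [cos_two_mul', div_pow, sub_div, div_self (pow_ne_zero 2 hx)]

/-- The denominator `D` shared by `K^θ` and `H^θ`. -/
noncomputable def parallelDenom (K H θ : ℝ) : ℝ := K * sin θ ^ 2 - H * sin (2 * θ) + 1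

section

variable {K H θ : ℝ}

theorem parallelDenom_eq_of_mul_sin_two_mul_eq (h : H * sin (2 * θ) = cos (2 * θ)) :
    parallelDenom K H θ = (K + 2) * sin θ ^ 2 := by
  rw [parallelDenom, h, cos_two_mul, cos_sq']
  ring

theorem gauss_numerator_eq_of_mul_sin_two_mul_eq (h : H * sin (2 * θ) = cos (2 * θ)) :
    K * cos (2 * θ) + 2 * H * sin (2 * θ) = (K + 2) * cos (2 * θ) := by
  linear_combination 2 * h

theorem mean_numerator_mul_sin_two_mul (h : (K + 1) * sin θ ^ 2 = cos θ ^ 2) :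
    (K * sin θ * cos θ - H * cos (2 * θ)) * sin (2 * θ) = cos (2 * θ) * parallelDenom K H θ := by
  rw [parallelDenom, sin_two_mul, cos_two_mul]
  linear_combination h - sin_sq_add_cos_sq θ

end

theorem parallel_surface_curvatures (K H θ : ℝ)
    (hD : K * Real.sin θ ^ 2 - H * Real.sin (2 * θ) + 1 ≠ 0) :
    (H ≠ 0 → Real.cos (2 * θ) ≠ 0 → Real.tan (2 * θ) = 1 / H → Real.sin θ ≠ 0 →
      (K * Real.cos (2 * θ) + 2 * H * Real.sin (2 * θ)) /
        (K * Real.sin θ ^ 2 - H * Real.sin (2 * θ) + 1)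
        = (Real.cos θ / Real.sin θ) ^ 2 - 1) ∧
    (K + 1 > 0 → Real.cos θ ≠ 0 → Real.tan θ ^ 2 = 1 / (K + 1) →
      (K * Real.sin θ * Real.cos θ - H * Real.cos (2 * θ)) /
        (K * Real.sin θ ^ 2 - H * Real.sin (2 * θ) + 1)
        = Real.cos (2 * θ) / Real.sin (2 * θ)) := by
  change parallelDenom K H θ ≠ 0 at hD
  constructor
  · intro hH hc2 htan hs
    have h := mul_sin_eq_cos_of_tan_eq_one_div hH hc2 htan
    change _ / parallelDenom K H θ = _
    rw [parallelDenom_eq_of_mul_sin_two_mul_eq h] at hD ⊢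
    rw [gauss_numerator_eq_of_mul_sin_two_mul_eq h, mul_div_mul_left _ _ (left_ne_zero_of_mul hD),
      cos_two_mul_div_sin_sq hs]
  · intro hK hc htan
    have h := mul_sin_sq_eq_cos_sq_of_tan_sq_eq_one_div hK.ne' hc htan
    have hs : sin θ ≠ 0 := fun hs => hc (by simpa [hs] using h.symm)
    have hs2 : sin (2 * θ) ≠ 0 := by
      rw [sin_two_mul]
      exact mul_ne_zero (mul_ne_zero two_ne_zero hs) hc
    exact (div_eq_div_iff hD hs2).mpr (mean_numerator_mul_sin_two_mul h)
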